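/- arXiv:1904.10822 — 2 statements merged into one kernel-verified Lean document; each statement's English description precedes it below -/
import Mathlib

section
/- Let γ : [0,1] → M be a continuous based loop at p. Suppose the complement [0,1] \ γ⁻¹(p) is a countable disjoint union of open intervals (aₙ, bₙ), n ∈ ℕ, and define for each N the loop γ_N by γ_N(t) = γ(t) if t ∈ (a_k, b_k) for some k ≤ N and γ_N(t) = p otherwise. Then each γ_N is continuous, and if M is a metric space and sup { d(γ(t), p) : t ∈ [aₙ, bₙ] } → 0 as n → ∞, then γ_N → γ uniformly on [0,1]. -/
open Set

/-- Truncations of a based loop along finitely many components of the complement of the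
base-point preimage are continuous, and converge uniformly to the loop provided the
suprema of distances to the base point on the components tend to `0`. -/
theorem stmt_9 {M : Type*} [MetricSpace M] (p : M) (γ : ℝ → M)
    (hγ : ContinuousOn γ (Icc 0 1)) (h0 : γ 0 = p) (h1 : γ 1 = p)
    (a b : ℕ → ℝ) (hab : ∀ n, a n < b n ∧ Ioo (a n) (b n) ⊆ Icc (0 : ℝ) 1)
    (hdisj : Pairwise (Function.onFun Disjoint fun n => Ioo (a n) (b n)))
    (hunion : (⋃ n, Ioo (a n) (b n)) = {t ∈ Icc (0 : ℝ) 1 | γ t ≠ p})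
    (γN : ℕ → ℝ → M)
    (hγN₁ : ∀ N t, (∃ k ≤ N, t ∈ Ioo (a k) (b k)) → γN N t = γ t)
    (hγN₂ : ∀ N t, ¬ (∃ k ≤ N, t ∈ Ioo (a k) (b k)) → γN N t = p) :
    (∀ N, ContinuousOn (γN N) (Icc 0 1)) ∧
    ((∀ ε > 0, ∃ n₀, ∀ n ≥ n₀, ∀ t ∈ Icc (a n) (b n), dist (γ t) p < ε) →
      ∀ ε > 0, ∃ N₀, ∀ N ≥ N₀, ∀ t ∈ Icc (0 : ℝ) 1, dist (γN N t) (γ t) < ε) := by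
  have key : ∀ N s, dist (γN N s) p ≤ dist (γ s) p := by
    intro N s
    by_cases h : ∃ k ≤ N, s ∈ Ioo (a k) (b k)
    · rw [hγN₁ N s h]
    · rw [hγN₂ N s h]; simp [dist_nonneg]
  constructor
  · intro N t ht
    by_cases hp : γ t = p
    · have htN : ¬ ∃ k ≤ N, t ∈ Ioo (a k) (b k) := by
        rintro ⟨k, hk, hmem⟩
        have : t ∈ ⋃ n, Ioo (a n) (b n) := mem_iUnion.mpr ⟨k, hmem⟩
        rw [hunion] at this
        exact this.2 hp
      have hγNt : γN N t = p := hγN₂ N t htN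
      rw [Metric.continuousWithinAt_iff]
      intro ε hε
      have hc := hγ t ht
      rw [Metric.continuousWithinAt_iff] at hc
      obtain ⟨δ, hδ, hδ'⟩ := hc ε hε
      refine ⟨δ, hδ, fun s hs hd => ?_⟩
      rw [hγNt]
      calc dist (γN N s) p ≤ dist (γ s) p := key N s
        _ = dist (γ s) (γ t) := by rw [hp]
        _ < ε := hδ' hs hd
    · have htU : t ∈ ⋃ n, Ioo (a n) (b n) := by
        rw [hunion]; exact ⟨ht, hp⟩
      obtain ⟨n, hn⟩ := mem_iUnion.mp htU
      by_cases hnN : n ≤ N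
      · have heq : ∀ᶠ s in nhdsWithin t (Icc 0 1), γN N s = γ s := by
          filter_upwards [nhdsWithin_le_nhds ((isOpen_Ioo).mem_nhds hn)] with s hs
          exact hγN₁ N s ⟨n, hnN, hs⟩
        exact (hγ t ht).congr_of_eventuallyEq heq (hγN₁ N t ⟨n, hnN, hn⟩)
      · have hval : ∀ s ∈ Ioo (a n) (b n), γN N s = p := by
          intro s hs
          apply hγN₂
          rintro ⟨k, hk, hsk⟩
          have hne : k ≠ n := fun h => hnN (h ▸ hk)
          exact Set.disjoint_left.mp (hdisj hne) hsk hs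
        have heq : ∀ᶠ s in nhdsWithin t (Icc 0 1), γN N s = p := by
          filter_upwards [nhdsWithin_le_nhds ((isOpen_Ioo).mem_nhds hn)] with s hs
          exact hval s hs
        exact (continuousWithinAt_const (b := p)).congr_of_eventuallyEq heq (hval t hn)
  · intro hsup ε hε
    obtain ⟨n₀, hn₀⟩ := hsup ε hε
    refine ⟨n₀, fun N hN t ht => ?_⟩
    by_cases h : ∃ k ≤ N, t ∈ Ioo (a k) (b k)
    · rw [hγN₁ N t h]; simpa using hε
    · rw [hγN₂ N t h, dist_comm]
      by_cases hp : γ t = p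
      · simpa [hp] using hε
      · have htU : t ∈ ⋃ n, Ioo (a n) (b n) := by rw [hunion]; exact ⟨ht, hp⟩
        obtain ⟨n, hn⟩ := mem_iUnion.mp htU
        have hnn : n₀ ≤ n := by
          by_contra hlt
          push_neg at hlt
          exact h ⟨n, le_trans hlt.le hN, hn⟩
        exact hn₀ n hnn t (Ioo_subset_Icc_self hn)
end

section
/- Let M be a metric space, p ∈ M, and γ : [0,1] → M a continuous based loop at p with bounded variation, and write [0,1] \ γ⁻¹(p) = ⊔ₙ (aₙ,bₙ) as a countable disjoint union of open intervals. Then rₙ := sup{ d(γ(t), p) : t ∈ [aₙ,bₙ] } satisfies rₙ → 0 as n → ∞. -/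
/-!
Since `aₙ ∈ [0, 1]` lies in none of the disjoint open intervals, `γ (aₙ) = p`, so `d(γ t, p)`
for `t ∈ [aₙ, bₙ]` is bounded by the variation `Vₙ` of `γ` on `[aₙ, bₙ]`. The intervals have
disjoint interiors, so `∑ Vₙ` is bounded by the total variation of `γ` on `[0, 1]`; a convergent
series of nonnegative terms has terms tending to `0`.
-/

open Set Filter Topology Function

section Intervals

variable {α : Type*} [LinearOrder α] [DenselyOrdered α]

theorem right_le_of_Ioo_disjoint_Ioo {a b c d : α} (hcd : c < d)
    (h : Disjoint (Ioo a b) (Ioo c d)) (hac : a ≤ c) : b ≤ c := by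
  rw [Ioo_disjoint_Ioo, max_eq_right hac] at h
  exact (min_le_iff.1 h).resolve_right hcd.not_ge

theorem left_notMem_Ioo_of_Ioo_disjoint_Ioo {a b c d : α} (hab : a < b)
    (h : Disjoint (Ioo a b) (Ioo c d)) : a ∉ Ioo c d := by
  rintro ⟨hca, had⟩
  rw [Ioo_disjoint_Ioo, max_eq_left hca.le] at h
  exact (lt_min hab had).not_ge h

theorem left_notMem_iUnion_Ioo {ι : Type*} {a b : ι → α} (hab : ∀ i, a i < b i)
    (hdisj : Pairwise (Disjoint on fun i => Ioo (a i) (b i))) (i : ι) :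
    a i ∉ ⋃ j, Ioo (a j) (b j) := by
  simp only [mem_iUnion, not_exists]
  intro j
  rcases eq_or_ne i j with rfl | hij
  · exact fun h => lt_irrefl _ h.1
  · exact left_notMem_Ioo_of_Ioo_disjoint_Ioo (hab i) (hdisj hij)

end Intervals

namespace eVariationOn

variable {α E ι : Type*} [LinearOrder α] [DenselyOrdered α] [PseudoEMetricSpace E]

theorem sum_Icc_le_biUnion (f : α → E) (F : Finset ι) {a b : ι → α}
    (hab : ∀ i ∈ F, a i < b i) (hdisj : (F : Set ι).PairwiseDisjoint fun i => Ioo (a i) (b i)) :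
    ∑ i ∈ F, eVariationOn f (Icc (a i) (b i)) ≤ eVariationOn f (⋃ i ∈ F, Icc (a i) (b i)) := by
  classical
  induction F using Finset.induction_on_max_value a with
  | empty => simp
  | insert m F hmF hmax ih =>
    have hbefore : ∀ x ∈ ⋃ i ∈ F, Icc (a i) (b i), ∀ y ∈ Icc (a m) (b m), x ≤ y := by
      simp only [mem_iUnion]
      rintro x ⟨i, hi, hx⟩ y hy
      have him : i ≠ m := fun h => hmF (h ▸ hi)
      have hbi : b i ≤ a m := right_le_of_Ioo_disjoint_Ioo (hab m (Finset.mem_insert_self m F))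
        (hdisj (Finset.mem_insert_of_mem hi) (Finset.mem_insert_self m F) him) (hmax i hi)
      exact hx.2.trans (hbi.trans hy.1)
    calc ∑ i ∈ insert m F, eVariationOn f (Icc (a i) (b i))
        ≤ eVariationOn f (⋃ i ∈ F, Icc (a i) (b i)) + eVariationOn f (Icc (a m) (b m)) := by
          rw [Finset.sum_insert hmF, add_comm]
          exact add_le_add_left (ih (fun i hi => hab i (Finset.mem_insert_of_mem hi))
            (hdisj.subset (Finset.coe_subset.2 (Finset.subset_insert m F)))) _
      _ ≤ eVariationOn f ((⋃ i ∈ F, Icc (a i) (b i)) ∪ Icc (a m) (b m)) :=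
          add_le_union f hbefore
      _ = eVariationOn f (⋃ i ∈ insert m F, Icc (a i) (b i)) := by
          rw [Finset.set_biUnion_insert, union_comm]

theorem tsum_Icc_le (f : α → E) {a b : ι → α} {s : Set α} (hab : ∀ i, a i < b i)
    (hdisj : Pairwise (Disjoint on fun i => Ioo (a i) (b i))) (hs : ∀ i, Icc (a i) (b i) ⊆ s) :
    ∑' i, eVariationOn f (Icc (a i) (b i)) ≤ eVariationOn f s := by
  rw [ENNReal.tsum_eq_iSup_sum]
  refine iSup_le fun F => ?_
  calc ∑ i ∈ F, eVariationOn f (Icc (a i) (b i))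
      ≤ eVariationOn f (⋃ i ∈ F, Icc (a i) (b i)) :=
        sum_Icc_le_biUnion f F (fun i _ => hab i) (hdisj.set_pairwise _)
    _ ≤ eVariationOn f s := mono f (iUnion₂_subset fun i _ => hs i)

end eVariationOn

namespace BoundedVariationOn

variable {α E ι : Type*} [LinearOrder α]

theorem tendsto_eVariationOn_Icc_cofinite_zero [DenselyOrdered α] [PseudoEMetricSpace E]
    {f : α → E} {s : Set α} (hf : BoundedVariationOn f s) {a b : ι → α} (hab : ∀ i, a i < b i)
    (hdisj : Pairwise (Disjoint on fun i => Ioo (a i) (b i))) (hs : ∀ i, Icc (a i) (b i) ⊆ s) :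
    Tendsto (fun i => (eVariationOn f (Icc (a i) (b i))).toReal) cofinite (𝓝 0) := by
  have hsum : ∑' i, eVariationOn f (Icc (a i) (b i)) ≠ ⊤ :=
    ((eVariationOn.tsum_Icc_le f hab hdisj hs).trans_lt hf.lt_top).ne
  simpa only [comp_def, ENNReal.toReal_zero] using (ENNReal.tendsto_toReal ENNReal.zero_ne_top).comp
    (ENNReal.tendsto_cofinite_zero_of_tsum_ne_top hsum)

theorem iSup_dist_le [PseudoMetricSpace E] {f : α → E} {a b : α}
    (hf : BoundedVariationOn f (Icc a b)) (hab : a ≤ b) :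
    ⨆ t : Icc a b, dist (f t) (f a) ≤ (eVariationOn f (Icc a b)).toReal := by
  have : Nonempty (Icc a b) := (nonempty_Icc.2 hab).to_subtype
  exact ciSup_le fun t => hf.dist_le t.2 (left_mem_Icc.2 hab)

end BoundedVariationOn

theorem stmt_19_general {M : Type*} [MetricSpace M] (p : M) (γ : ℝ → M)
    (hbv : BoundedVariationOn γ (Icc 0 1))
    (a b : ℕ → ℝ) (hab : ∀ n, a n < b n ∧ Ioo (a n) (b n) ⊆ Icc (0 : ℝ) 1)
    (hdisj : Pairwise (Function.onFun Disjoint fun n => Ioo (a n) (b n)))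
    (hunion : (⋃ n, Ioo (a n) (b n)) = {t ∈ Icc (0 : ℝ) 1 | γ t ≠ p}) :
    Filter.Tendsto (fun n => ⨆ t : Icc (a n) (b n), dist (γ (t : ℝ)) p)
      Filter.atTop (nhds 0) := by
  have hIcc : ∀ n, Icc (a n) (b n) ⊆ Icc 0 1 := fun n => by
    simpa only [closure_Ioo (hab n).1.ne] using closure_minimal (hab n).2 isClosed_Icc
  have hstart : ∀ n, γ (a n) = p := fun n => by
    by_contra h
    refine left_notMem_iUnion_Ioo (fun m => (hab m).1) hdisj n ?_
    rw [hunion]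
    exact ⟨hIcc n (left_mem_Icc.2 (hab n).1.le), h⟩
  have hV := hbv.tendsto_eVariationOn_Icc_cofinite_zero (fun n => (hab n).1) hdisj hIcc
  rw [Nat.cofinite_eq_atTop] at hV
  refine squeeze_zero (fun n => Real.iSup_nonneg fun _ => dist_nonneg) (fun n => ?_) hV
  rw [← hstart n]
  exact (hbv.mono (hIcc n)).iSup_dist_le (hab n).1.le

/-- If a continuous based loop at `p` in a metric space has bounded variation on `[0,1]`,
and `[0,1] \ γ⁻¹(p)` is the disjoint union of the open intervals `(aₙ, bₙ)`, then the
suprema `rₙ = sup { d(γ t, p) : t ∈ [aₙ, bₙ] }` tend to `0`. -/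
theorem stmt_19 {M : Type*} [MetricSpace M] (p : M) (γ : ℝ → M)
    (hγ : ContinuousOn γ (Icc 0 1)) (h0 : γ 0 = p) (h1 : γ 1 = p)
    (hbv : BoundedVariationOn γ (Icc 0 1))
    (a b : ℕ → ℝ) (hab : ∀ n, a n < b n ∧ Ioo (a n) (b n) ⊆ Icc (0 : ℝ) 1)
    (hdisj : Pairwise (Function.onFun Disjoint fun n => Ioo (a n) (b n)))
    (hunion : (⋃ n, Ioo (a n) (b n)) = {t ∈ Icc (0 : ℝ) 1 | γ t ≠ p}) :
    Filter.Tendsto (fun n => ⨆ t : Icc (a n) (b n), dist (γ (t : ℝ)) p)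
      Filter.atTop (nhds 0) :=
  stmt_19_general p γ hbv a b hab hdisj hunion
end
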